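/- Let λ₁, λ₂, λ₃ : ℝ → ℝ be smooth functions of one variable and u : ℝ³ → ℝ smooth with u₁, u₂, u₃ nowhere zero. Define the 1-form ω_λ = (λ - λ₂(x²))(λ - λ₃(x³)) u₁ dx¹ + (λ - λ₁(x¹))(λ - λ₃(x³)) u₂ dx² + (λ - λ₁(x¹))(λ - λ₂(x²)) u₃ dx³ on ℝ³. Then dω_λ ∧ ω_λ = 0 holds for all λ ∈ ℝ if and only if u satisfies (λ₂(x²) - λ₃(x³)) u₁ u₂₃ + (λ₃(x³) - λ₁(x¹)) u₂ u₁₃ + (λ₁(x¹) - λ₂(x²)) u₃ u₁₂ = 0. -/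

import Mathlib

noncomputable def pd {n : ℕ} (i : Fin n) (f : (Fin n → ℝ) → ℝ) (x : Fin n → ℝ) : ℝ :=
  fderiv ℝ f x (Pi.single i 1)

/-- Components of the 1-form ω_λ on ℝ³. -/
noncomputable def w (l1 l2 l3 : ℝ → ℝ) (u : (Fin 3 → ℝ) → ℝ) (lam : ℝ) :
    Fin 3 → (Fin 3 → ℝ) → ℝ :=
  ![fun x => (lam - l2 (x 1)) * (lam - l3 (x 2)) * pd 0 u x,
    fun x => (lam - l1 (x 0)) * (lam - l3 (x 2)) * pd 1 u x,
    fun x => (lam - l1 (x 0)) * (lam - l2 (x 1)) * pd 2 u x]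


lemma pd_mul {n : ℕ} (i : Fin n) {f g : (Fin n → ℝ) → ℝ} {x : Fin n → ℝ}
    (hf : DifferentiableAt ℝ f x) (hg : DifferentiableAt ℝ g x) :
    pd i (fun y => f y * g y) x = pd i f x * g x + f x * pd i g x := by
  unfold pd
  rw [fderiv_fun_mul hf hg]
  simp
  ring

lemma contDiff_pd {n : ℕ} (c : Fin n) {u : (Fin n → ℝ) → ℝ} (hu : ContDiff ℝ (⊤ : ℕ∞) u) :
    ContDiff ℝ (⊤ : ℕ∞) (pd c u) :=
  (ContinuousLinearMap.apply ℝ ℝ (Pi.single c 1 : Fin n → ℝ)).contDiff.comp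
    (hu.fderiv_right ((by simp)))

lemma diff_proj_comp {n : ℕ} (la : ℝ → ℝ) (hla : Differentiable ℝ la) (a : Fin n) :
    Differentiable ℝ (fun x : Fin n → ℝ => la (x a)) :=
  hla.comp ((ContinuousLinearMap.proj a (R := ℝ) (φ := fun _ : Fin n => ℝ)).differentiable)

lemma pd_comp_proj {n : ℕ} (la : ℝ → ℝ) (hla : Differentiable ℝ la) (a m : Fin n)
    (x : Fin n → ℝ) :
    pd m (fun x => la (x a)) x = (if m = a then 1 else 0) * deriv la (x a) := by
  have hp : HasFDerivAt (fun x : Fin n → ℝ => x a)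
      (ContinuousLinearMap.proj a (R := ℝ) (φ := fun _ : Fin n => ℝ)) x :=
    (ContinuousLinearMap.proj a (R := ℝ) (φ := fun _ : Fin n => ℝ)).hasFDerivAt
  have h1 : HasFDerivAt (fun x : Fin n → ℝ => la (x a))
      (deriv la (x a) • ContinuousLinearMap.proj a (R := ℝ) (φ := fun _ : Fin n => ℝ)) x :=
    ((hla (x a)).hasDerivAt).comp_hasFDerivAt x hp
  rw [pd, h1.fderiv]
  simp [Pi.single_apply, eq_comm]

lemma pd_const_sub_proj {n : ℕ} (lam : ℝ) (la : ℝ → ℝ) (hla : Differentiable ℝ la)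
    (a m : Fin n) (x : Fin n → ℝ) :
    pd m (fun x => lam - la (x a)) x = -((if m = a then 1 else 0) * deriv la (x a)) := by
  unfold pd
  rw [fderiv_fun_sub (differentiableAt_const lam) ((diff_proj_comp la hla a).differentiableAt)]
  rw [← pd_comp_proj la hla a m x]
  simp [pd]

lemma fderiv_pd {n : ℕ} {u : (Fin n → ℝ) → ℝ} (hu : ContDiff ℝ (⊤ : ℕ∞) u) (m c : Fin n)
    (x : Fin n → ℝ) :
    pd m (pd c u) x = fderiv ℝ (fderiv ℝ u) x (Pi.single m 1) (Pi.single c 1) := by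
  have h : pd c u = fun y => (ContinuousLinearMap.apply ℝ ℝ (Pi.single c 1 : Fin n → ℝ))
      (fderiv ℝ u y) := rfl
  rw [pd, h]
  rw [show (fun y => (ContinuousLinearMap.apply ℝ ℝ (Pi.single c 1 : Fin n → ℝ)) (fderiv ℝ u y))
      = (ContinuousLinearMap.apply ℝ ℝ (Pi.single c 1 : Fin n → ℝ)) ∘ fderiv ℝ u from rfl]
  rw [((ContinuousLinearMap.apply ℝ ℝ (Pi.single c 1 : Fin n → ℝ)).hasFDerivAt.comp x
    (((hu.fderiv_right (m := (⊤ : ℕ∞)) ((by simp))).differentiable (by simp) x).hasFDerivAt)).fderiv]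
  simp

lemma pd_comm {n : ℕ} {u : (Fin n → ℝ) → ℝ} (hu : ContDiff ℝ (⊤ : ℕ∞) u) (m c : Fin n)
    (x : Fin n → ℝ) : pd m (pd c u) x = pd c (pd m u) x := by
  rw [fderiv_pd hu, fderiv_pd hu]
  exact second_derivative_symmetric
    (fun y => (hu.differentiable (by simp) y).hasFDerivAt)
    (((hu.fderiv_right (m := (⊤ : ℕ∞)) (by simp)).differentiable (by simp) x).hasFDerivAt) _ _

lemma pd_prod (la lb : ℝ → ℝ) (hla : Differentiable ℝ la) (hlb : Differentiable ℝ lb)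
    {u : (Fin 3 → ℝ) → ℝ} (hu : ContDiff ℝ (⊤ : ℕ∞) u) (lam : ℝ) (a b c m : Fin 3)
    (x : Fin 3 → ℝ) :
    pd m (fun x => (lam - la (x a)) * (lam - lb (x b)) * pd c u x) x
      = -((if m = a then 1 else 0) * deriv la (x a)) * (lam - lb (x b)) * pd c u x
        + (lam - la (x a)) * (-((if m = b then 1 else 0) * deriv lb (x b))) * pd c u x
        + (lam - la (x a)) * (lam - lb (x b)) * pd m (pd c u) x := by
  have d1 : DifferentiableAt ℝ (fun x : Fin 3 → ℝ => lam - la (x a)) x :=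
    ((differentiable_const lam).sub (diff_proj_comp la hla a)).differentiableAt
  have d2 : DifferentiableAt ℝ (fun x : Fin 3 → ℝ => lam - lb (x b)) x :=
    ((differentiable_const lam).sub (diff_proj_comp lb hlb b)).differentiableAt
  have d3 : DifferentiableAt ℝ (pd c u) x :=
    ((contDiff_pd c hu).differentiable (by simp)).differentiableAt
  rw [pd_mul m (d1.fun_mul d2) d3, pd_mul m d1 d2, pd_const_sub_proj lam la hla a m x,
    pd_const_sub_proj lam lb hlb b m x]
  ring

lemma expand (l1 l2 l3 : ℝ → ℝ) (hl1 : Differentiable ℝ l1) (hl2 : Differentiable ℝ l2)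
    (hl3 : Differentiable ℝ l3) {u : (Fin 3 → ℝ) → ℝ} (hu : ContDiff ℝ (⊤ : ℕ∞) u)
    (lam : ℝ) (x : Fin 3 → ℝ) :
    (pd 0 (w l1 l2 l3 u lam 1) x - pd 1 (w l1 l2 l3 u lam 0) x) * w l1 l2 l3 u lam 2 x
      + (pd 1 (w l1 l2 l3 u lam 2) x - pd 2 (w l1 l2 l3 u lam 1) x) * w l1 l2 l3 u lam 0 x
      + (pd 2 (w l1 l2 l3 u lam 0) x - pd 0 (w l1 l2 l3 u lam 2) x) * w l1 l2 l3 u lam 1 x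
    = -((lam - l1 (x 0)) * (lam - l2 (x 1)) * (lam - l3 (x 2))) *
      ((l2 (x 1) - l3 (x 2)) * pd 0 u x * pd 1 (pd 2 u) x
      + (l3 (x 2) - l1 (x 0)) * pd 1 u x * pd 0 (pd 2 u) x
      + (l1 (x 0) - l2 (x 1)) * pd 2 u x * pd 0 (pd 1 u) x) := by
  simp only [w, Matrix.cons_val_zero, Matrix.cons_val_one, Matrix.head_cons,
    Matrix.cons_val_two, Matrix.tail_cons]
  rw [pd_prod l2 l3 hl2 hl3 hu lam 1 2 0 1 x, pd_prod l2 l3 hl2 hl3 hu lam 1 2 0 2 x,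
    pd_prod l1 l3 hl1 hl3 hu lam 0 2 1 0 x, pd_prod l1 l3 hl1 hl3 hu lam 0 2 1 2 x,
    pd_prod l1 l2 hl1 hl2 hu lam 0 1 2 0 x, pd_prod l1 l2 hl1 hl2 hu lam 0 1 2 1 x]
  rw [pd_comm hu 1 0 x, pd_comm hu 2 1 x, pd_comm hu 2 0 x]
  have e1 : ((2:Fin 3) = 1) = False := by simp
  have e2 : ((2:Fin 3) = 0) = False := by simp
  have e3 : ((1:Fin 3) = 2) = False := by simp
  have e4 : ((1:Fin 3) = 0) = False := by simp
  have e5 : ((0:Fin 3) = 2) = False := by simp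
  have e6 : ((0:Fin 3) = 1) = False := by simp
  have e7 : ((0:Fin 3) = 0) = True := by simp
  have e8 : ((1:Fin 3) = 1) = True := by simp
  have e9 : ((2:Fin 3) = 2) = True := by simp
  simp only [e1, e2, e3, e4, e5, e6, e7, e8, e9, if_true, if_false]
  ring
/-- dω_λ ∧ ω_λ = 0 for all λ iff the deformed Hirota equation holds. -/
theorem stmt2 (l1 l2 l3 : ℝ → ℝ) (hl1 : ContDiff ℝ (⊤ : ℕ∞) l1) (hl2 : ContDiff ℝ (⊤ : ℕ∞) l2)
    (hl3 : ContDiff ℝ (⊤ : ℕ∞) l3)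
    (u : (Fin 3 → ℝ) → ℝ) (hu : ContDiff ℝ (⊤ : ℕ∞) u)
    (h1 : ∀ x, pd 0 u x ≠ 0) (h2 : ∀ x, pd 1 u x ≠ 0) (h3 : ∀ x, pd 2 u x ≠ 0) :
    (∀ (lam : ℝ) (x : Fin 3 → ℝ), ∀ i j k : Fin 3,
        (pd i (w l1 l2 l3 u lam j) x - pd j (w l1 l2 l3 u lam i) x) * w l1 l2 l3 u lam k x
      + (pd j (w l1 l2 l3 u lam k) x - pd k (w l1 l2 l3 u lam j) x) * w l1 l2 l3 u lam i x
      + (pd k (w l1 l2 l3 u lam i) x - pd i (w l1 l2 l3 u lam k) x) * w l1 l2 l3 u lam j x = 0)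
    ↔ (∀ x : Fin 3 → ℝ,
        (l2 (x 1) - l3 (x 2)) * pd 0 u x * pd 1 (pd 2 u) x
      + (l3 (x 2) - l1 (x 0)) * pd 1 u x * pd 0 (pd 2 u) x
      + (l1 (x 0) - l2 (x 1)) * pd 2 u x * pd 0 (pd 1 u) x = 0) := by
  have dl1 := hl1.differentiable (by simp)
  have dl2 := hl2.differentiable (by simp)
  have dl3 := hl3.differentiable (by simp)
  constructor
  · intro h x
    set lam : ℝ := max (l1 (x 0)) (max (l2 (x 1)) (l3 (x 2))) + 1 with hlam
    have H := h lam x 0 1 2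
    rw [expand l1 l2 l3 dl1 dl2 dl3 hu lam x] at H
    have p1 : lam - l1 (x 0) ≠ 0 := by
      have : l1 (x 0) ≤ max (l1 (x 0)) (max (l2 (x 1)) (l3 (x 2))) := le_max_left _ _
      nlinarith
    have p2 : lam - l2 (x 1) ≠ 0 := by
      have : l2 (x 1) ≤ max (l1 (x 0)) (max (l2 (x 1)) (l3 (x 2))) :=
        le_trans (le_max_left _ _) (le_max_right _ _)
      nlinarith
    have p3 : lam - l3 (x 2) ≠ 0 := by
      have : l3 (x 2) ≤ max (l1 (x 0)) (max (l2 (x 1)) (l3 (x 2))) :=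
        le_trans (le_max_right _ _) (le_max_right _ _)
      nlinarith
    have := mul_ne_zero (mul_ne_zero p1 p2) p3
    rcases mul_eq_zero.1 H with h' | h'
    · exact absurd h' (by simpa using this)
    · exact h'
  · intro h lam x i j k
    have H0 := expand l1 l2 l3 dl1 dl2 dl3 hu lam x
    rw [h x, mul_zero] at H0
    fin_cases i <;> fin_cases j <;> fin_cases k <;>
      simp only [Fin.mk_zero, Fin.mk_one, show ((⟨2, by omega⟩ : Fin 3)) = 2 from rfl] <;>
      first | ring1 | linear_combination H0 | linear_combination (-1 : ℝ) * H0
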